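/- arXiv:1805.01820 — 2 statements merged into one kernel-verified Lean document; each statement's English description precedes it below -/
import Mathlib

section
/- Let p ≥ 2, H ≥ 2, and let M be the p×H block matrix M = [[B₁, 0], [B₂, B₃], [0, B₄]], where B₁ and B₂ are scalars, B₃ is a 1×(H−1) row vector, and B₄ is a (p−2)×(H−1) matrix. Let ν > 1, λ > 0, A > 0, α > 0, n > 0 be reals, and suppose: (1 − 1/(2ν)) λ ≤ B₁² ≤ (1 + 1/(2ν)) λ, and the Frobenius-norm bound ‖ [[B₂², B₂B₃], [B₃ᵀB₂, B₃ᵀB₃ + B₄ᵀB₄]] − (A/n) I_H ‖_F ≤ √p · α / n holds. Then λ_max(M Mᵀ) ≥ A/n − √p · α / n + (1 − 1/(2ν)) λ. -/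
open MeasureTheory ProbabilityTheory Filter Matrix Asymptotics
open scoped ENNReal NNReal Topology

noncomputable section

/-- The largest eigenvalue of a symmetric matrix, via the Rayleigh quotient. -/
def lambdaMax {ι : Type*} [Fintype ι] (A : Matrix ι ι ℝ) : ℝ :=
  sSup {r : ℝ | ∃ v : ι → ℝ, ∑ i, v i ^ 2 = 1 ∧ r = ∑ i, ∑ j, v i * A i j * v j}

/-- The smallest eigenvalue of a symmetric matrix, via the Rayleigh quotient. -/
def lambdaMin {ι : Type*} [Fintype ι] (A : Matrix ι ι ℝ) : ℝ :=
  sInf {r : ℝ | ∃ v : ι → ℝ, ∑ i, v i ^ 2 = 1 ∧ r = ∑ i, ∑ j, v i * A i j * v j}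

/-- `λ_max^{(m)}(A)`: the largest eigenvalue over all `m × m` principal submatrices. -/
def lambdaMaxSparse {ι : Type*} [Fintype ι] (m : ℕ) (A : Matrix ι ι ℝ) : ℝ :=
  sSup {r : ℝ | ∃ S : Finset ι, S.card = m ∧
    r = lambdaMax (A.submatrix (Subtype.val : {x // x ∈ S} → ι) Subtype.val)}

/-- The SDP relaxation `λ̃_max^{(m)}(A)`. -/
def lambdaMaxSDP {p : ℕ} (m : ℝ) (A : Matrix (Fin p) (Fin p) ℝ) : ℝ :=
  sSup {r : ℝ | ∃ M : Matrix (Fin p) (Fin p) ℝ, M.PosSemidef ∧ M.trace = 1 ∧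
    (∑ i, ∑ j, |M i j|) ≤ m ∧ r = (A * M).trace}

/-- `X ~ N(0, S)`: every linear functional of `X` is a centered Gaussian with the
appropriate variance. -/
def IsGaussianVec {Ω : Type*} [MeasurableSpace Ω] {p : ℕ} (μ : Measure Ω)
    (X : Ω → Fin p → ℝ) (S : Matrix (Fin p) (Fin p) ℝ) : Prop :=
  ∀ a : Fin p → ℝ,
    Measure.map (fun ω => ∑ i, a i * X ω i) μ =
      gaussianReal 0 (Real.toNNReal (∑ i, ∑ j, a i * S i j * a j))

/-- The `i`-th coordinate of the central curve `E[x | y]`. -/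
def condExpVec {Ω : Type*} [MeasurableSpace Ω] {p : ℕ} (μ : Measure Ω)
    (X : Ω → Fin p → ℝ) (Y : Ω → ℝ) (i : Fin p) : Ω → ℝ :=
  μ[fun ω => X ω i | MeasurableSpace.comap Y Real.measurableSpace]

/-- The matrix `var(E[x | y])`. -/
def condExpCovMatrix {Ω : Type*} [MeasurableSpace Ω] {p : ℕ} (μ : Measure Ω)
    (X : Ω → Fin p → ℝ) (Y : Ω → ℝ) : Matrix (Fin p) (Fin p) ℝ :=
  Matrix.of fun i j =>
    (∫ ω, condExpVec μ X Y i ω * condExpVec μ X Y j ω ∂μ) -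
      (∫ ω, X ω i ∂μ) * (∫ ω, X ω j ∂μ)

/-- The generalized signal-to-noise ratio: largest eigenvalue of `var(E[x|y])`. -/
def gSNR {Ω : Type*} [MeasurableSpace Ω] {p : ℕ} (μ : Measure Ω)
    (X : Ω → Fin p → ℝ) (Y : Ω → ℝ) : ℝ :=
  lambdaMax (condExpCovMatrix μ X Y)

/-- The index of the `l`-th observation in the `h`-th slice. -/
def sliceIndex (c H : ℕ) (h : Fin H) (l : Fin c) : Fin (c * H) :=
  ⟨h.1 * c + l.1, by
    have h1 := h.2; have h2 := l.2
    calc h.1 * c + l.1 < h.1 * c + c := by omega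
      _ = (h.1 + 1) * c := by ring
      _ ≤ H * c := Nat.mul_le_mul_right c h1
      _ = c * H := Nat.mul_comm H c⟩

/-- The SIR estimate `Λ̂_H` of `var(E[x|y])`, using `H` slices of `c` observations each,
sorted by the value of the response. -/
def sirEstimate {p : ℕ} (c H : ℕ) (y : Fin (c * H) → ℝ)
    (x : Fin (c * H) → Fin p → ℝ) : Matrix (Fin p) (Fin p) ℝ :=
  Matrix.of fun i j =>
    (H : ℝ)⁻¹ * ∑ h : Fin H,
      ((c : ℝ)⁻¹ * ∑ l : Fin c, x (Tuple.sort y (sliceIndex c H h l)) i) *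
      ((c : ℝ)⁻¹ * ∑ l : Fin c, x (Tuple.sort y (sliceIndex c H h l)) j)

/-- Frobenius norm of a real matrix. -/
def frobNorm {ι κ : Type*} [Fintype ι] [Fintype κ] (A : Matrix ι κ ℝ) : ℝ :=
  Real.sqrt (∑ i, ∑ j, A i j ^ 2)

/-- `g(z)` is sub-Gaussian when `z ~ N(0,1)`. -/
def SubGaussianStd (g : ℝ → ℝ) : Prop :=
  ∃ K : ℝ, 0 < K ∧ ∀ u : ℝ, 0 ≤ u →
    (gaussianReal 0 1) {z : ℝ | u ≤ |g z|} ≤ ENNReal.ofReal (2 * Real.exp (-(u ^ 2) / K))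

/-- Condition B): `f(z)` is sub-Gaussian, `E[f(z)] = 0` and
`var(f(z)) > C·var(E[z | f(z)+ε])` where `z, ε` are i.i.d. `N(0,1)`. -/
def ConditionB (C : ℝ) (g : ℝ → ℝ) : Prop :=
  SubGaussianStd g ∧ (∫ z, g z ∂(gaussianReal 0 1)) = 0 ∧
    C * variance
        (((gaussianReal 0 1).prod (gaussianReal 0 1))[fun w => w.1 |
          MeasurableSpace.comap (fun w : ℝ × ℝ => g w.1 + w.2) Real.measurableSpace])
        ((gaussianReal 0 1).prod (gaussianReal 0 1)) <
      variance (fun w : ℝ × ℝ => g w.1) ((gaussianReal 0 1).prod (gaussianReal 0 1))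

/-- The sliced stable condition for the central curve `m(y) = E[x|y]`. -/
def SlicedStable {Ω : Type*} [MeasurableSpace Ω] {p : ℕ} (μ : Measure Ω)
    (X : Ω → Fin p → ℝ) (Y : Ω → ℝ) (ϑ : ℝ) : Prop :=
  ∃ a₁ a₂ a₃ : ℝ, 0 < a₁ ∧ a₁ < 1 ∧ 1 < a₂ ∧ 0 < a₃ ∧
    ∃ H₀ : ℕ, ∀ H : ℕ, H₀ < H → ∀ a : ℕ → EReal,
      a 0 = ⊥ → a H = ⊤ → (∀ h < H, a h ≤ a (h + 1)) →
      (∀ h < H,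
        ENNReal.ofReal (a₁ / H) ≤
            μ {ω | a h ≤ (Y ω : EReal) ∧ (Y ω : EReal) ≤ a (h + 1)} ∧
          μ {ω | a h ≤ (Y ω : EReal) ∧ (Y ω : EReal) ≤ a (h + 1)} ≤
            ENNReal.ofReal (a₂ / H)) →
      ∀ γ : Fin p → ℝ,
        (H : ℝ)⁻¹ * ∑ h ∈ Finset.range H,
            variance (fun ω => ∑ i, γ i * condExpVec μ X Y i ω)
              (μ[|{ω | a h ≤ (Y ω : EReal) ∧ (Y ω : EReal) < a (h + 1)}]) ≤
          (a₃ / (H : ℝ) ^ ϑ) * variance (fun ω => ∑ i, γ i * condExpVec μ X Y i ω) μ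

/-- Rejection region of the test `Ψ_SSS = max{ψ₁(τ), ψ₂(τ')}` based on `n = c·H`
i.i.d. observations. -/
def rejectSSS {Ω : Type*} {p : ℕ} (c H ks : ℕ) (S : Matrix (Fin p) (Fin p) ℝ)
    (τ τ' : ℝ) (X : Ω → Fin p → ℝ) (Y : Ω → ℝ) : Set (Fin (c * H) → Ω) :=
  {ω | S.trace / ((c * H : ℕ) : ℝ) + τ <
        lambdaMax (sirEstimate c H (fun i => Y (ω i)) fun i => X (ω i)) ∨
      τ' < lambdaMaxSparse ks (sirEstimate c H (fun i => Y (ω i)) fun i => X (ω i))}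

/-- Rejection region of `Ψ_SSSa = max{ψ₁(τ), ψ₂(τ'), ψ₃(τ'')}`. -/
def rejectSSSa {Ω : Type*} {p : ℕ} (c H ks : ℕ) (S : Matrix (Fin p) (Fin p) ℝ)
    (τ τ' τ'' : ℝ) (X : Ω → Fin p → ℝ) (Y : Ω → ℝ) : Set (Fin (c * H) → Ω) :=
  {ω | S.trace / ((c * H : ℕ) : ℝ) + τ <
        lambdaMax (sirEstimate c H (fun i => Y (ω i)) fun i => X (ω i)) ∨
      τ' < lambdaMaxSparse ks (sirEstimate c H (fun i => Y (ω i)) fun i => X (ω i)) ∨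
      τ'' < ((c * H : ℕ) : ℝ)⁻¹ * ∑ j, (Y (ω j) ^ 2 - 1)}

/-- Rejection region of the computationally feasible test `Ψ̃_SSS = max{ψ₁(τ), ψ̃₂(τ')}`. -/
def rejectSSStilde {Ω : Type*} {p : ℕ} (c H ks : ℕ) (S : Matrix (Fin p) (Fin p) ℝ)
    (τ τ' : ℝ) (X : Ω → Fin p → ℝ) (Y : Ω → ℝ) : Set (Fin (c * H) → Ω) :=
  {ω | S.trace / ((c * H : ℕ) : ℝ) + τ <
        lambdaMax (sirEstimate c H (fun i => Y (ω i)) fun i => X (ω i)) ∨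
      τ' < lambdaMaxSDP ks (sirEstimate c H (fun i => Y (ω i)) fun i => X (ω i))}

/-- Rejection region of `Ψ̃_SSSa = max{ψ₁(τ), ψ̃₂(τ'), ψ₃(τ'')}`. -/
def rejectSSSaTilde {Ω : Type*} {p : ℕ} (c H ks : ℕ) (S : Matrix (Fin p) (Fin p) ℝ)
    (τ τ' τ'' : ℝ) (X : Ω → Fin p → ℝ) (Y : Ω → ℝ) : Set (Fin (c * H) → Ω) :=
  {ω | S.trace / ((c * H : ℕ) : ℝ) + τ <
        lambdaMax (sirEstimate c H (fun i => Y (ω i)) fun i => X (ω i)) ∨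
      τ' < lambdaMaxSDP ks (sirEstimate c H (fun i => Y (ω i)) fun i => X (ω i)) ∨
      τ'' < ((c * H : ℕ) : ℝ)⁻¹ * ∑ j, (Y (ω j) ^ 2 - 1)}

/-!
The Rayleigh quotient of `M Mᵀ` at `v` is `‖Mᵀ v‖²`, so testing it on the normalised first
column of `M` shows that `λ_max(M Mᵀ)` is at least the squared norm `B₁² + B₂²` of that
column. The lower bound on `B₁²` is a hypothesis, and `B₂²` is the `(1,1)` entry of the Gram
matrix of `M` without its first row (whose first column is `B₂` followed by zeros), which the
Frobenius bound keeps within `√p·α/n` of `A/n`.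
-/

open Finset

section

variable {ι κ : Type*} [Fintype ι] [Fintype κ]

theorem rayleigh_le_lambdaMax (A : Matrix ι ι ℝ) {v : ι → ℝ} (hv : ∑ i, v i ^ 2 = 1) :
    ∑ i, ∑ j, v i * A i j * v j ≤ lambdaMax A := by
  refine le_csSup ⟨∑ i, ∑ j, |A i j|, ?_⟩ ⟨v, hv, rfl⟩
  rintro _ ⟨w, hw, rfl⟩
  have hw_le : ∀ i, |w i| ≤ 1 := fun i => by
    rw [← sq_le_one_iff_abs_le_one, ← hw]
    exact single_le_sum (f := fun j => w j ^ 2) (fun _ _ => sq_nonneg _) (mem_univ i)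
  gcongr with i _ j _
  calc w i * A i j * w j ≤ |w i| * |A i j| * |w j| := by
        rw [← abs_mul, ← abs_mul]; exact le_abs_self _
    _ ≤ 1 * |A i j| * 1 := by gcongr <;> exact hw_le _
    _ = |A i j| := by ring

theorem rayleigh_mul_transpose (M : Matrix ι κ ℝ) (v : ι → ℝ) :
    ∑ i, ∑ j, v i * (M * Mᵀ) i j * v j = ∑ m, (∑ i, v i * M i m) ^ 2 := by
  simp only [Matrix.mul_apply, Matrix.transpose_apply, sq, mul_sum, sum_mul]
  rw [Finset.sum_comm_cycle]
  refine Finset.sum_congr rfl fun m _ => ?_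
  rw [Finset.sum_comm]
  exact Finset.sum_congr rfl fun i _ => Finset.sum_congr rfl fun j _ => by ring

theorem lambdaMax_mul_transpose_nonneg (M : Matrix ι κ ℝ) : 0 ≤ lambdaMax (M * Mᵀ) := by
  refine Real.sSup_nonneg fun _ ⟨v, _, hr⟩ => ?_
  rw [hr, rayleigh_mul_transpose]
  positivity

theorem sum_sq_col_le_lambdaMax_mul_transpose (M : Matrix ι κ ℝ) (m : κ) :
    ∑ i, M i m ^ 2 ≤ lambdaMax (M * Mᵀ) := by
  set s := ∑ i, M i m ^ 2 with hs_def
  rcases (sum_nonneg fun i _ => sq_nonneg (M i m) : 0 ≤ s).eq_or_lt with hs | hs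
  · linarith [lambdaMax_mul_transpose_nonneg M]
  have hsqrt : Real.sqrt s ^ 2 = s := Real.sq_sqrt hs.le
  let v : ι → ℝ := fun i => M i m / Real.sqrt s
  have hv : ∑ i, v i ^ 2 = 1 := by
    simp only [v, div_pow, ← Finset.sum_div, hsqrt, ← hs_def]
    exact div_self hs.ne'
  have hvm : (∑ i, v i * M i m) ^ 2 = s := by
    simp only [v, div_mul_eq_mul_div, ← Finset.sum_div, ← sq, div_pow, hsqrt, ← hs_def]
    field_simp
  calc s = (∑ i, v i * M i m) ^ 2 := hvm.symm
    _ ≤ ∑ m', (∑ i, v i * M i m') ^ 2 :=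
        single_le_sum (f := fun m' => (∑ i, v i * M i m') ^ 2) (fun _ _ => sq_nonneg _)
          (mem_univ m)
    _ = ∑ i, ∑ j, v i * (M * Mᵀ) i j * v j := (rayleigh_mul_transpose M v).symm
    _ ≤ lambdaMax (M * Mᵀ) := rayleigh_le_lambdaMax _ hv

theorem abs_apply_le_frobNorm (A : Matrix ι κ ℝ) (i : ι) (j : κ) : |A i j| ≤ frobNorm A := by
  rw [frobNorm, ← Real.sqrt_sq_eq_abs]
  gcongr
  calc A i j ^ 2 ≤ ∑ j', A i j' ^ 2 :=
        single_le_sum (f := fun j' => A i j' ^ 2) (fun _ _ => sq_nonneg _) (mem_univ j)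
    _ ≤ ∑ i', ∑ j', A i' j' ^ 2 :=
        single_le_sum (f := fun i' => ∑ j', A i' j' ^ 2)
          (fun _ _ => sum_nonneg fun _ _ => sq_nonneg _) (mem_univ i)

theorem sub_frobNorm_le_sum_sq_col [DecidableEq κ] (N : Matrix ι κ ℝ) (c : ℝ) (j : κ) :
    c - frobNorm (Nᵀ * N - c • (1 : Matrix κ κ ℝ)) ≤ ∑ i, N i j ^ 2 := by
  have hentry : (Nᵀ * N - c • (1 : Matrix κ κ ℝ)) j j = ∑ i, N i j ^ 2 - c := by
    simp [Matrix.mul_apply, sq]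
  have h := (abs_le.mp (abs_apply_le_frobNorm (Nᵀ * N - c • (1 : Matrix κ κ ℝ)) j j)).1
  rw [hentry] at h
  linarith

end

/-- **Lemma 3.** Let `M = [[B₁, 0], [B₂, B₃], [0, B₄]]` be a `p×H` block matrix
(`B₁ = M₀₀`, `B₂ = M₁₀` scalars, `B₃` the rest of the second row, `B₄` the
lower-right block), with `(1 − 1/(2ν))λ ≤ B₁² ≤ (1 + 1/(2ν))λ` and
`‖M₋ᵀM₋ − (A/n)I_H‖_F ≤ √p·α/n`, where `M₋` is `M` with its first row removed
(so that `M₋ᵀM₋ = [[B₂², B₂B₃], [B₃ᵀB₂, B₃ᵀB₃ + B₄ᵀB₄]]`). Then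
`λ_max(MMᵀ) ≥ A/n − √p·α/n + (1 − 1/(2ν))λ`. -/
theorem block_matrix_eigenvalue_lower_bound
    (p H : ℕ) (hp : 2 ≤ p) (hH : 2 ≤ H)
    (M : Matrix (Fin p) (Fin H) ℝ)
    (ν lam A α n : ℝ)
    -- block structure: zeros in the first column below the second row
    (hcol0 : ∀ i : Fin p, 2 ≤ i.1 → M i ⟨0, by omega⟩ = 0)
    -- `(1 − 1/(2ν))λ ≤ B₁² ≤ (1 + 1/(2ν))λ`
    (hB1l : (1 - 1 / (2 * ν)) * lam ≤ M ⟨0, by omega⟩ ⟨0, by omega⟩ ^ 2)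
    -- Frobenius bound on the Gram matrix of `M` with its first row removed
    (hfrob : frobNorm
        ((M.submatrix (fun i : Fin (p - 1) => (⟨i.1 + 1, by have := i.2; omega⟩ : Fin p)) id)ᵀ *
            M.submatrix (fun i : Fin (p - 1) => (⟨i.1 + 1, by have := i.2; omega⟩ : Fin p)) id -
          (A / n) • (1 : Matrix (Fin H) (Fin H) ℝ)) ≤ Real.sqrt p * α / n) :
    A / n - Real.sqrt p * α / n + (1 - 1 / (2 * ν)) * lam ≤ lambdaMax (M * Mᵀ) := by
  set N := M.submatrix (fun i : Fin (p - 1) => (⟨i.1 + 1, by have := i.2; omega⟩ : Fin p)) id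
  have hB2 : ∑ i, N i ⟨0, by omega⟩ ^ 2 = M ⟨1, by omega⟩ ⟨0, by omega⟩ ^ 2 := by
    refine (Fintype.sum_eq_single (⟨0, by omega⟩ : Fin (p - 1)) fun i hi => ?_).trans rfl
    have hi' : i.1 ≠ 0 := fun h => hi (Fin.ext h)
    simp [N, hcol0 ⟨i.1 + 1, by omega⟩ (by simp only; omega)]
  have hcol : ∑ i, M i ⟨0, by omega⟩ ^ 2 =
      M ⟨0, by omega⟩ ⟨0, by omega⟩ ^ 2 + M ⟨1, by omega⟩ ⟨0, by omega⟩ ^ 2 :=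
    Fintype.sum_eq_add _ _ (by simp [Fin.ext_iff]) fun i hi => by
      simp [hcol0 i (by simp only [ne_eq, Fin.ext_iff] at hi; omega)]
  have hN := sub_frobNorm_le_sum_sq_col N (A / n) ⟨0, by omega⟩
  calc A / n - Real.sqrt p * α / n + (1 - 1 / (2 * ν)) * lam
      ≤ M ⟨0, by omega⟩ ⟨0, by omega⟩ ^ 2 + M ⟨1, by omega⟩ ⟨0, by omega⟩ ^ 2 := by
        linarith
    _ = ∑ i, M i ⟨0, by omega⟩ ^ 2 := hcol.symm
    _ ≤ lambdaMax (M * Mᵀ) := sum_sq_col_le_lambdaMax_mul_transpose M _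

end
end

section
/- Let x₁,…,x_p, ε be independent standard normal random variables, let k ≤ p, set S = x₁ + … + x_k, and define y = S − S³/(3k) + ε. Then E[x_j · y] = 0 for every j = 1,…,p; that is, the response y is marginally uncorrelated with every covariate. -/
open MeasureTheory ProbabilityTheory Filter Matrix Asymptotics
open scoped ENNReal NNReal Topology

noncomputable section

/-! If `x_j` is one of the `k` summands of `S`, write `S = x_j + R`, where `R`, the sum of the
other `k - 1` summands, is independent of `x_j`. Expanding and factoring by independence, the
Gaussian moments `E x² = 1`, `E x³ = 0`, `E x⁴ = 3` (read off the fourth derivative at `0` of the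
mgf `exp (t² / 2)`) and `E R² = k - 1` give `E[x_j S] = 1` and `E[x_j S³] = 3 + 3 (k - 1) = 3k`,
so `E[x_j (S - S³ / (3k))] = 1 - 3k / (3k) = 0`. Otherwise `x_j` is independent of `S` and
centred. The noise contributes `E x_j · E ε = 0`. -/

-- `q` is left free so that each caller can give the new polynomial factor in normal form.
lemma deriv_mul_exp_mul_sq_div_two {v : ℝ} {p p' q : ℝ → ℝ} (hp : ∀ t, HasDerivAt p (p' t) t)
    (hq : ∀ t, q t = p' t + v * t * p t) :
    deriv (fun t ↦ p t * Real.exp (v * t ^ 2 / 2)) = fun t ↦ q t * Real.exp (v * t ^ 2 / 2) := by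
  ext t
  have h : HasDerivAt (fun t : ℝ ↦ v * t ^ 2 / 2) (v * t) t :=
    (((hasDerivAt_pow 2 t).const_mul v).div_const 2).congr_deriv (by norm_num; ring)
  rw [((hp t).fun_mul h.exp).deriv, hq]
  ring

lemma iteratedDeriv_four_exp_mul_sq_div_two (v : ℝ) :
    iteratedDeriv 4 (fun t : ℝ ↦ Real.exp (v * t ^ 2 / 2)) =
      fun t ↦ (3 * v ^ 2 + 6 * v ^ 3 * t ^ 2 + v ^ 4 * t ^ 4) * Real.exp (v * t ^ 2 / 2) := by
  have hpow (n : ℕ) (c t : ℝ) : HasDerivAt (fun t ↦ c * t ^ (n + 1)) (c * (n + 1) * t ^ n) t :=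
    ((hasDerivAt_pow (n + 1) t).const_mul c).congr_deriv (by push_cast; ring)
  have h1 : deriv (fun t ↦ 1 * Real.exp (v * t ^ 2 / 2)) =
      fun t ↦ (v * t ^ 1) * Real.exp (v * t ^ 2 / 2) :=
    deriv_mul_exp_mul_sq_div_two (fun t ↦ hasDerivAt_const t 1) fun t ↦ by ring
  have h2 : deriv (fun t ↦ (v * t ^ 1) * Real.exp (v * t ^ 2 / 2)) =
      fun t ↦ (v + v ^ 2 * t ^ 2) * Real.exp (v * t ^ 2 / 2) :=
    deriv_mul_exp_mul_sq_div_two (hpow 0 v) fun t ↦ by push_cast; ring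
  have h3 : deriv (fun t ↦ (v + v ^ 2 * t ^ 2) * Real.exp (v * t ^ 2 / 2)) =
      fun t ↦ (3 * v ^ 2 * t ^ 1 + v ^ 3 * t ^ 3) * Real.exp (v * t ^ 2 / 2) :=
    deriv_mul_exp_mul_sq_div_two (fun t ↦ (hpow 1 _ t).const_add _) fun t ↦ by push_cast; ring
  have h4 : deriv (fun t ↦ (3 * v ^ 2 * t ^ 1 + v ^ 3 * t ^ 3) * Real.exp (v * t ^ 2 / 2)) =
      fun t ↦ (3 * v ^ 2 + 6 * v ^ 3 * t ^ 2 + v ^ 4 * t ^ 4) * Real.exp (v * t ^ 2 / 2) :=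
    deriv_mul_exp_mul_sq_div_two (fun t ↦ (hpow 0 _ t).add (hpow 2 _ t)) fun t ↦ by push_cast; ring
  simp only [iteratedDeriv_succ, iteratedDeriv_zero]
  simp only [one_mul] at h1
  rw [h1, h2, h3, h4]

namespace ProbabilityTheory

section Moments

variable {v : ℝ≥0}

lemma integral_pow_of_odd_gaussianReal {n : ℕ} (hn : Odd n) :
    ∫ x, x ^ n ∂gaussianReal 0 v = 0 := by
  have h : ∫ x, x ^ n ∂gaussianReal 0 v = ∫ x, (-x) ^ n ∂gaussianReal 0 v := by
    conv_lhs => rw [← neg_zero, ← gaussianReal_map_neg, integral_map (by fun_prop) (by fun_prop)]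
  simp only [hn.neg_pow, integral_neg] at h
  linarith

lemma integral_sq_gaussianReal : ∫ x, x ^ 2 ∂gaussianReal 0 v = v := by
  rw [← variance_of_integral_eq_zero aemeasurable_id' (by simp), variance_fun_id_gaussianReal]

lemma integral_pow_four_gaussianReal : ∫ x, x ^ 4 ∂gaussianReal 0 v = 3 * v ^ 2 := by
  have h := iteratedDeriv_mgf_zero (X := fun x ↦ x) (μ := gaussianReal 0 v) (by simp) 4
  simp only [mgf_fun_id_gaussianReal, zero_mul, zero_add,
    iteratedDeriv_four_exp_mul_sq_div_two] at h
  simpa using h.symm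

end Moments

variable {Ω : Type*} {mΩ : MeasurableSpace Ω} {P : Measure Ω} {X R : Ω → ℝ}

lemma _root_.MeasureTheory.MemLp.integrable_pow [IsFiniteMeasure P] {n m : ℕ} (hX : MemLp X n P)
    (hm : m ≤ n) : Integrable (fun ω ↦ X ω ^ m) P :=
  ((hX.mono_exponent (by exact_mod_cast hm)).integrable_norm_pow').mono'
    (hX.aestronglyMeasurable.aemeasurable.pow_const m).aestronglyMeasurable
    (.of_forall fun ω ↦ (norm_pow (X ω) m).le)

lemma memLp_of_hasLaw_gaussianReal {m : ℝ} {v : ℝ≥0} (hX : HasLaw X (gaussianReal m v) P) (n : ℕ) :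
    MemLp X n P :=
  hX.hasGaussianLaw.memLp (by simp)

lemma IndepFun.integrable_pow_mul_pow (hXR : X ⟂ᵢ[P] R) {a b : ℕ}
    (hX : Integrable (fun ω ↦ X ω ^ a) P) (hR : Integrable (fun ω ↦ R ω ^ b) P) :
    Integrable (fun ω ↦ X ω ^ a * R ω ^ b) P :=
  (hXR.comp (measurable_id.pow_const a) (measurable_id.pow_const b)).integrable_mul hX hR

lemma IndepFun.integral_pow_mul_pow (hXR : X ⟂ᵢ[P] R) (hX : AEMeasurable X P)
    (hR : AEMeasurable R P) (a b : ℕ) :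
    ∫ ω, X ω ^ a * R ω ^ b ∂P = (∫ ω, X ω ^ a ∂P) * ∫ ω, R ω ^ b ∂P :=
  (hXR.comp (measurable_id.pow_const a) (measurable_id.pow_const b)
    ).integral_fun_mul_eq_mul_integral (hX.pow_const a).aestronglyMeasurable
      (hR.pow_const b).aestronglyMeasurable

lemma IndepFun.integrable_mul_add_pow [IsFiniteMeasure P] (hXR : X ⟂ᵢ[P] R) {n : ℕ}
    (hX : MemLp X (n + 1 : ℕ) P) (hR : MemLp R n P) :
    Integrable (fun ω ↦ X ω * (X ω + R ω) ^ n) P := by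
  have h : (fun ω ↦ X ω * (X ω + R ω) ^ n) =
      fun ω ↦ ∑ m ∈ Finset.range (n + 1), n.choose m * (X ω ^ (m + 1) * R ω ^ (n - m)) := by
    ext ω
    rw [add_pow, Finset.mul_sum]
    refine Finset.sum_congr rfl fun m _ ↦ by ring
  rw [h]
  refine integrable_finsetSum _ fun m hm ↦ (hXR.integrable_pow_mul_pow ?_ ?_).const_mul _
  · exact hX.integrable_pow (by simp only [Finset.mem_range] at hm; omega)
  · exact hR.integrable_pow (Nat.sub_le n m)

section Gaussian

variable {v : ℝ≥0} (hX : HasLaw X (gaussianReal 0 v) P) (hXR : X ⟂ᵢ[P] R)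
include hX hXR

lemma IndepFun.integral_pow_mul_pow_of_hasLaw_gaussianReal (hR : AEMeasurable R P) (a b : ℕ) :
    ∫ ω, X ω ^ a * R ω ^ b ∂P = (∫ x, x ^ a ∂gaussianReal 0 v) * ∫ ω, R ω ^ b ∂P := by
  rw [hXR.integral_pow_mul_pow hX.aemeasurable hR, ← hX.integral_comp (by fun_prop)]
  rfl

lemma IndepFun.integrable_pow_mul_pow_of_hasLaw_gaussianReal {n : ℕ} (hR : MemLp R n P) (a : ℕ)
    {b : ℕ} (hb : b ≤ n) : Integrable (fun ω ↦ X ω ^ a * R ω ^ b) P :=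
  have := hX.isProbabilityMeasure
  hXR.integrable_pow_mul_pow ((memLp_of_hasLaw_gaussianReal hX a).integrable_pow le_rfl)
    (hR.integrable_pow hb)

lemma IndepFun.integral_mul_add_of_hasLaw_gaussianReal (hR : MemLp R 1 P) :
    ∫ ω, X ω * (X ω + R ω) ∂P = v := by
  have := hX.isProbabilityMeasure
  have hint := hXR.integrable_pow_mul_pow_of_hasLaw_gaussianReal hX (n := 1) (by simpa using hR)
  calc ∫ ω, X ω * (X ω + R ω) ∂P
      = ∫ ω, X ω ^ 2 * R ω ^ 0 ∂P + ∫ ω, X ω ^ 1 * R ω ^ 1 ∂P := by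
        rw [← integral_add (hint 2 (by simp)) (hint 1 le_rfl)]
        exact integral_congr_ae (.of_forall fun ω ↦ by simp only; ring)
    _ = v := by
        simp only [hXR.integral_pow_mul_pow_of_hasLaw_gaussianReal hX hR.aemeasurable,
          integral_sq_gaussianReal, integral_pow_of_odd_gaussianReal odd_one]
        simp

lemma IndepFun.integral_mul_add_pow_three_of_hasLaw_gaussianReal (hR : MemLp R 3 P) :
    ∫ ω, X ω * (X ω + R ω) ^ 3 ∂P = 3 * v * (v + ∫ ω, R ω ^ 2 ∂P) := by
  have := hX.isProbabilityMeasure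
  have hint := hXR.integrable_pow_mul_pow_of_hasLaw_gaussianReal hX (n := 3) (by simpa using hR)
  have h4 := hint 4 (b := 0) (by simp)
  have h3 := (hint 3 (b := 1) (by simp)).const_mul 3
  have h2 := (hint 2 (b := 2) (by simp)).const_mul 3
  have h1 := hint 1 (b := 3) le_rfl
  calc ∫ ω, X ω * (X ω + R ω) ^ 3 ∂P
      = ∫ ω, X ω ^ 4 * R ω ^ 0 + 3 * (X ω ^ 3 * R ω ^ 1) + 3 * (X ω ^ 2 * R ω ^ 2) +
          X ω ^ 1 * R ω ^ 3 ∂P := integral_congr_ae (.of_forall fun ω ↦ by simp only; ring)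
    _ = ∫ ω, X ω ^ 4 * R ω ^ 0 ∂P + 3 * ∫ ω, X ω ^ 3 * R ω ^ 1 ∂P +
          3 * ∫ ω, X ω ^ 2 * R ω ^ 2 ∂P + ∫ ω, X ω ^ 1 * R ω ^ 3 ∂P := by
        rw [integral_add ((h4.fun_add h3).fun_add h2) h1, integral_add (h4.fun_add h3) h2,
          integral_add h4 h3, integral_const_mul, integral_const_mul]
    _ = 3 * v * (v + ∫ ω, R ω ^ 2 ∂P) := by
        simp only [hXR.integral_pow_mul_pow_of_hasLaw_gaussianReal hX hR.aemeasurable,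
          integral_sq_gaussianReal, integral_pow_four_gaussianReal,
          integral_pow_of_odd_gaussianReal odd_one,
          integral_pow_of_odd_gaussianReal (n := 3) (by decide)]
        simp only [pow_zero, integral_const, probReal_univ, smul_eq_mul]
        ring

end Gaussian

section IID

open Finset

variable {ι : Type*} {X : ι → Ω → ℝ} {v : ℝ≥0}

lemma iIndepFun.indepFun_sum_of_notMem (hind : iIndepFun X P) (hmeas : ∀ i, AEMeasurable (X i) P)
    {s : Finset ι} {j : ι} (hj : j ∉ s) : X j ⟂ᵢ[P] fun ω ↦ ∑ i ∈ s, X i ω := by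
  simpa only [Finset.sum_fn] using (hind.indepFun_finsetSum_of_notMem₀ hmeas hj).symm

lemma memLp_sum_of_hasLaw_gaussianReal (hX : ∀ i, HasLaw (X i) (gaussianReal 0 v) P)
    (s : Finset ι) (n : ℕ) : MemLp (fun ω ↦ ∑ i ∈ s, X i ω) n P :=
  memLp_finsetSum s fun i _ ↦ memLp_of_hasLaw_gaussianReal (hX i) n

variable (hind : iIndepFun X P) (hX : ∀ i, HasLaw (X i) (gaussianReal 0 v) P)
include hind hX

lemma iIndepFun.integral_sum_sq_of_hasLaw_gaussianReal (s : Finset ι) :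
    ∫ ω, (∑ i ∈ s, X i ω) ^ 2 ∂P = #s * v := by
  have := hind.isProbabilityMeasure
  have hmean : ∫ ω, ∑ i ∈ s, X i ω ∂P = 0 := by
    rw [integral_finsetSum s fun i _ ↦ (hX i).hasGaussianLaw.integrable]
    exact Finset.sum_eq_zero fun i _ ↦ by rw [(hX i).integral_eq, integral_id_gaussianReal]
  have hvar := IndepFun.variance_sum (s := s) (fun i _ ↦ memLp_of_hasLaw_gaussianReal (hX i) 2)
    fun i _ j _ hij ↦ hind.indepFun hij
  rw [Finset.sum_fn, variance_of_integral_eq_zero (by fun_prop) hmean] at hvar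
  simp [hvar, (hX _).variance_eq]

lemma iIndepFun.integrable_mul_sum_pow_of_hasLaw_gaussianReal (s : Finset ι) (j : ι) (n : ℕ) :
    Integrable (fun ω ↦ X j ω * (∑ i ∈ s, X i ω) ^ n) P := by
  classical
  have := hind.isProbabilityMeasure
  have hmeas i := (hX i).aemeasurable
  by_cases hj : j ∈ s
  · simp_rw [← Finset.add_sum_erase s _ hj]
    exact (hind.indepFun_sum_of_notMem hmeas (s.notMem_erase j)).integrable_mul_add_pow
      (memLp_of_hasLaw_gaussianReal (hX j) _) (memLp_sum_of_hasLaw_gaussianReal hX _ n)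
  · simpa using (hind.indepFun_sum_of_notMem hmeas hj).integrable_pow_mul_pow (a := 1)
      (by simpa using (hX j).hasGaussianLaw.integrable)
      ((memLp_sum_of_hasLaw_gaussianReal hX s n).integrable_pow le_rfl)

lemma iIndepFun.integral_mul_sum_pow_of_notMem {s : Finset ι} {j : ι} (hj : j ∉ s) (n : ℕ) :
    ∫ ω, X j ω * (∑ i ∈ s, X i ω) ^ n ∂P = 0 := by
  simpa using (hind.indepFun_sum_of_notMem (fun i ↦ (hX i).aemeasurable) hj
    ).integral_pow_mul_pow_of_hasLaw_gaussianReal (hX j) (by fun_prop) 1 n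

lemma iIndepFun.integral_mul_sum_of_hasLaw_gaussianReal [DecidableEq ι] (s : Finset ι) (j : ι) :
    ∫ ω, X j ω * ∑ i ∈ s, X i ω ∂P = if j ∈ s then (v : ℝ) else 0 := by
  split_ifs with hj
  · simp_rw [← Finset.add_sum_erase s _ hj]
    exact (hind.indepFun_sum_of_notMem (fun i ↦ (hX i).aemeasurable) (s.notMem_erase j)
      ).integral_mul_add_of_hasLaw_gaussianReal (hX j)
        (by simpa using memLp_sum_of_hasLaw_gaussianReal hX _ 1)
  · simpa using hind.integral_mul_sum_pow_of_notMem hX hj 1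

lemma iIndepFun.integral_mul_sum_pow_three_of_hasLaw_gaussianReal [DecidableEq ι] (s : Finset ι)
    (j : ι) :
    ∫ ω, X j ω * (∑ i ∈ s, X i ω) ^ 3 ∂P = if j ∈ s then 3 * (v : ℝ) ^ 2 * #s else 0 := by
  split_ifs with hj
  · simp_rw [← Finset.add_sum_erase s _ hj]
    rw [(hind.indepFun_sum_of_notMem (fun i ↦ (hX i).aemeasurable) (s.notMem_erase j)
      ).integral_mul_add_pow_three_of_hasLaw_gaussianReal (hX j)
        (memLp_sum_of_hasLaw_gaussianReal hX _ 3),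
      hind.integral_sum_sq_of_hasLaw_gaussianReal hX, ← Finset.card_erase_add_one hj]
    push_cast
    ring
  · exact hind.integral_mul_sum_pow_of_notMem hX hj 3

end IID

section Cubic

open Finset

variable {ι : Type*} {X : ι → Ω → ℝ} (hind : iIndepFun X P)
  (hX : ∀ i, HasLaw (X i) (gaussianReal 0 1) P) (s : Finset ι) (j : ι)
include hind hX

lemma iIndepFun.integrable_mul_sum_sub_sum_pow_three_div :
    Integrable (fun ω ↦ X j ω * (∑ i ∈ s, X i ω - (∑ i ∈ s, X i ω) ^ 3 / (3 * #s))) P := by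
  have h1 : Integrable (fun ω ↦ X j ω * ∑ i ∈ s, X i ω) P := by
    simpa using hind.integrable_mul_sum_pow_of_hasLaw_gaussianReal hX s j 1
  have h3 := hind.integrable_mul_sum_pow_of_hasLaw_gaussianReal hX s j 3
  refine (h1.sub (h3.div_const (3 * #s))).congr (.of_forall fun ω ↦ ?_)
  simp only [Pi.sub_apply]
  ring

theorem iIndepFun.integral_mul_sum_sub_sum_pow_three_div_eq_zero :
    ∫ ω, X j ω * (∑ i ∈ s, X i ω - (∑ i ∈ s, X i ω) ^ 3 / (3 * #s)) ∂P = 0 := by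
  classical
  have h1 : Integrable (fun ω ↦ X j ω * ∑ i ∈ s, X i ω) P := by
    simpa using hind.integrable_mul_sum_pow_of_hasLaw_gaussianReal hX s j 1
  have h3 := hind.integrable_mul_sum_pow_of_hasLaw_gaussianReal hX s j 3
  simp only [mul_sub, mul_div_assoc']
  rw [integral_sub h1 (h3.div_const _), integral_div,
    hind.integral_mul_sum_of_hasLaw_gaussianReal hX,
    hind.integral_mul_sum_pow_three_of_hasLaw_gaussianReal hX]
  split_ifs with hj
  · have : (#s : ℝ) ≠ 0 := by exact_mod_cast (Finset.card_pos.2 ⟨j, hj⟩).ne'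
    field_simp
    simp
  · simp

end Cubic

lemma integral_prod_mul_add_snd {α : Type*} [MeasurableSpace α] {μ : Measure α} [SFinite μ]
    {ν : Measure ℝ} [IsProbabilityMeasure ν] {f g : α → ℝ} (hf : Integrable f μ)
    (hfg : Integrable (fun x ↦ f x * g x) μ) (hν : Integrable (fun e ↦ e) ν) (hν₀ : ∫ e, e ∂ν = 0) :
    ∫ z, f z.1 * (g z.1 + z.2) ∂μ.prod ν = ∫ x, f x * g x ∂μ := by
  simp_rw [mul_add]
  rw [integral_add (hfg.comp_fst ν) (hf.mul_prod hν), integral_fun_fst (f := fun x ↦ f x * g x),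
    integral_prod_mul (f := f) (g := fun e ↦ e), hν₀]
  simp

end ProbabilityTheory

theorem cubic_model_zero_correlation_general
    (p k : ℕ) (hkp : k ≤ p) (j : Fin p) :
    ∫ ω : (Fin p → ℝ) × ℝ,
        ω.1 j * ((∑ i ∈ Finset.univ.filter fun i : Fin p => i.1 < k, ω.1 i) -
          (∑ i ∈ Finset.univ.filter fun i : Fin p => i.1 < k, ω.1 i) ^ 3 / (3 * k) +
          ω.2)
      ∂((Measure.pi fun _ : Fin p => gaussianReal 0 1).prod (gaussianReal 0 1)) = 0 := by
  set s := Finset.univ.filter fun i : Fin p => i.1 < k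
  have hcard : (s.card : ℝ) = k := by simp [s, Fin.card_filter_val_lt, hkp]
  have hind : iIndepFun (fun i (x : Fin p → ℝ) ↦ x i) (Measure.pi fun _ ↦ gaussianReal 0 1) :=
    iIndepFun_pi (X := fun _ ↦ id) fun _ ↦ aemeasurable_id
  have hX (i : Fin p) : HasLaw (fun x : Fin p → ℝ ↦ x i) (gaussianReal 0 1)
      (Measure.pi fun _ ↦ gaussianReal 0 1) :=
    (measurePreserving_eval (fun _ ↦ gaussianReal 0 1) i).hasLaw
  rw [← hcard]
  exact (integral_prod_mul_add_snd (hX j).hasGaussianLaw.integrable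
    (hind.integrable_mul_sum_sub_sum_pow_three_div hX s j)
    ((memLp_id_gaussianReal 1).integrable (by simp)) integral_id_gaussianReal).trans
    (hind.integral_mul_sum_sub_sum_pow_three_div_eq_zero hX s j)

/-- **Example 1.** Let `x₁, …, x_p, ε` be i.i.d. standard normal, `k ≤ p`,
`S = x₁ + … + x_k` and `y = S − S³/(3k) + ε`. Then `E[x_j · y] = 0` for every
`j`: the response is marginally uncorrelated with every covariate. -/
theorem cubic_model_zero_correlation
    (p k : ℕ) (hk : 0 < k) (hkp : k ≤ p) (j : Fin p) :
    ∫ ω : (Fin p → ℝ) × ℝ,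
        ω.1 j * ((∑ i ∈ Finset.univ.filter fun i : Fin p => i.1 < k, ω.1 i) -
          (∑ i ∈ Finset.univ.filter fun i : Fin p => i.1 < k, ω.1 i) ^ 3 / (3 * k) +
          ω.2)
      ∂((Measure.pi fun _ : Fin p => gaussianReal 0 1).prod (gaussianReal 0 1)) = 0 :=
  cubic_model_zero_correlation_general p k hkp j
end
end
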